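/- Let T be a tree on n vertices with domination number 2. Then ξ^{ee}(T) ≤ (5n−4)/6, with equality if and only if T is isomorphic to a double star P_2(a,b) for some integers a, b ≥ 1 with a + b = n − 2. -/

import Mathlib

open SimpleGraph

variable {V : Type*}

noncomputable def ecc (G : SimpleGraph V) (v : V) : ℕ := ⨆ u : V, G.dist v u

noncomputable def deg (G : SimpleGraph V) (v : V) : ℕ := (G.neighborSet v).ncard

noncomputable def ree {V : Type*} [Fintype V] (G : SimpleGraph V) : ℝ :=
  letI := Classical.decEq V
  letI := Classical.decRel G.Adj
  ∑ e ∈ G.edgeFinset,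
    Sym2.lift ⟨fun u v => 1 / (ecc G u : ℝ) + 1 / (ecc G v : ℝ), fun _ _ => by ring⟩ e

noncomputable def gdiam (G : SimpleGraph V) : ℕ := ⨆ v : V, ecc G v

/-- The domination number of a graph: the minimum size of a dominating set. -/
noncomputable def domNum {W : Type*} (G : SimpleGraph W) : ℕ :=
  sInf {m | ∃ D : Set W, (∀ x : W, x ∈ D ∨ ∃ y ∈ D, G.Adj x y) ∧ D.ncard = m}

/-- The double star `P_2(a,b)`: an edge `uv` (vertices 0 and 1) with `a` pendant
vertices attached to `u` (vertices 2, …, a+1) and `b` pendant vertices attached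
to `v` (vertices a+2, …, a+b+1). -/
def doubleStar (a b : ℕ) : SimpleGraph (Fin (a + b + 2)) :=
  SimpleGraph.fromRel (fun x y => (x.val = 0 ∧ y.val = 1) ∨
    (x.val = 0 ∧ 2 ≤ y.val ∧ y.val < a + 2) ∨ (x.val = 1 ∧ a + 2 ≤ y.val))

/-!
Write ξ^{ee}(T) = ∑ᵥ deg v / ε(v), since every edge contributes the reciprocal eccentricities of
its two ends. As γ(T) = 2, no vertex dominates T, so ε(v) ≥ 2 for every v; moreover two distinct
vertices of eccentricity 2 are adjacent, since in a tree a common neighbour of them would dominate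
T. Their neighbourhoods are then pairwise disjoint (no triangles), so the degrees of the vertices
of eccentricity 2 add up to at most n. Bounding 1/ε(v) by 1/2 at those vertices and by 1/3
elsewhere gives ξ^{ee}(T) ≤ 2(n - 1)/3 + n/6 = (5n - 4)/6. Equality forces the neighbourhoods of
two adjacent vertices u, v to cover T, i.e. uv is a dominating edge, which in a tree means that T
is the double star with centres u and v; conversely in a double star ε = 2 at u, v and ε = 3
elsewhere, so both estimates are sharp.
-/

namespace SimpleGraph

open Finset

variable {G : SimpleGraph V} {u v m x y : V}

lemma dist_le_ecc [Finite V] (v u : V) : G.dist v u ≤ ecc G v :=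
  le_ciSup (Set.finite_range _).bddAbove u

lemma ecc_le_iff [Finite V] [Nonempty V] {k : ℕ} : ecc G v ≤ k ↔ ∀ u, G.dist v u ≤ k :=
  ciSup_le_iff (Set.finite_range _).bddAbove

lemma Connected.ecc_le_dist_add_ecc [Finite V] (hG : G.Connected) (v w : V) :
    ecc G v ≤ G.dist v w + ecc G w :=
  have := hG.nonempty
  ecc_le_iff.2 fun u => hG.dist_triangle.trans (Nat.add_le_add_left (dist_le_ecc w u) _)

lemma domNum_le_ncard {D : Set V} (hD : ∀ x, x ∈ D ∨ ∃ y ∈ D, G.Adj x y) :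
    domNum G ≤ D.ncard :=
  Nat.sInf_le ⟨D, hD, rfl⟩

lemma Connected.two_le_ecc_of_one_lt_domNum [Finite V] (hG : G.Connected)
    (hd : 1 < domNum G) (v : V) : 2 ≤ ecc G v := by
  by_contra! h
  have hD : ∀ x, x ∈ ({v} : Set V) ∨ ∃ y ∈ ({v} : Set V), G.Adj x y := by
    intro x
    have hx : G.dist v x ≤ 1 := (dist_le_ecc v x).trans (Nat.le_of_lt_succ h)
    rcases Nat.le_one_iff_eq_zero_or_eq_one.1 hx with hx | hx
    · exact Or.inl (hG.dist_eq_zero_iff.1 hx).symm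
    · exact Or.inr ⟨v, rfl, (dist_eq_one_iff_adj.1 hx).symm⟩
  have := domNum_le_ncard hD
  rw [Set.ncard_singleton] at this
  omega

lemma IsAcyclic.mem_edges_of_adj (hG : G.IsAcyclic) (h : G.Adj u v) (p : G.Walk u v) :
    s(u, v) ∈ p.edges :=
  isBridge_iff_forall_walk_mem_edges.1 (isAcyclic_iff_forall_isBridge.1 hG h) p

lemma IsAcyclic.not_adj_of_adj_of_adj (hG : G.IsAcyclic) (huv : G.Adj u v) (hux : G.Adj u x) :
    ¬ G.Adj x v := fun hxv => by
  have := hG.mem_edges_of_adj huv (.cons hux (.cons hxv .nil))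
  simp only [Walk.edges_cons, Walk.edges_nil, List.mem_cons, List.not_mem_nil, Sym2.eq_iff,
    or_false] at this
  grind [hux.ne, hxv.ne, huv.ne]

lemma IsAcyclic.not_adj_of_adj_of_adj_of_adj (hG : G.IsAcyclic) (huv : G.Adj u v)
    (hux : G.Adj u x) (hyv : G.Adj y v) (hxv : x ≠ v) (hyu : y ≠ u) : ¬ G.Adj x y := fun hxy => by
  have := hG.mem_edges_of_adj huv (.cons hux (.cons hxy (.cons hyv .nil)))
  simp only [Walk.edges_cons, Walk.edges_nil, List.mem_cons, List.not_mem_nil, Sym2.eq_iff,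
    or_false] at this
  grind [hux.ne, hxy.ne, huv.ne]

lemma Walk.eq_or_adj_of_mem_edges_of_length_le_two (w : G.Walk y x) (hw : w.length ≤ 2)
    (hy : y ≠ m) (he : s(u, m) ∈ w.edges) : x = m ∨ G.Adj m x := by
  rcases w with _ | ⟨h₁, _ | ⟨h₂, _ | ⟨h₃, w⟩⟩⟩
  · simp at he
  · simp only [Walk.edges_cons, Walk.edges_nil, List.mem_cons, List.not_mem_nil, Sym2.eq_iff,
      or_false] at he
    grind
  · simp only [Walk.edges_cons, Walk.edges_nil, List.mem_cons, List.not_mem_nil, Sym2.eq_iff,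
      or_false] at he
    grind [Adj.symm]
  · simp at hw

lemma IsAcyclic.eq_or_adj_of_walks_length_le_two (hG : G.IsAcyclic) (hum : G.Adj u m)
    (hvm : G.Adj v m) (huv : u ≠ v) (p : G.Walk u x) (hp : p.length ≤ 2) (q : G.Walk v x)
    (hq : q.length ≤ 2) : x = m ∨ G.Adj m x := by
  -- the walk `u ⇝ x ⇝ v → m` has to cross the bridge `s(u, m)` inside `p` or inside `q`
  have he := hG.mem_edges_of_adj hum (p.append (q.reverse.concat hvm))
  simp only [Walk.edges_append, Walk.edges_concat, Walk.edges_reverse, List.concat_eq_append,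
    List.mem_append, List.mem_reverse, List.mem_singleton, Sym2.eq_iff, huv, hvm.ne', false_and,
    and_false, or_self, or_false] at he
  rcases he with he | he
  · exact p.eq_or_adj_of_mem_edges_of_length_le_two hp hum.ne he
  · exact q.eq_or_adj_of_mem_edges_of_length_le_two hq hvm.ne he

lemma Walk.exists_adj_adj_of_length_eq_two (p : G.Walk u v) (hp : p.length = 2) :
    ∃ m, G.Adj u m ∧ G.Adj m v := by
  rcases p with _ | ⟨h₁, _ | ⟨h₂, _ | _⟩⟩ <;> simp at hp
  exact ⟨_, h₁, h₂⟩

lemma IsTree.adj_of_ecc_le_two [Finite V] (hT : G.IsTree) (h2 : ∀ w, 2 ≤ ecc G w)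
    (hu : ecc G u ≤ 2) (hv : ecc G v ≤ 2) (huv : u ≠ v) : G.Adj u v := by
  by_contra hnadj
  have hc := hT.connected
  obtain ⟨r, hr⟩ := hc.exists_walk_length_eq_dist u v
  have hr2 : r.length = 2 := le_antisymm (hr ▸ (dist_le_ecc u v).trans hu)
    (hr ▸ hc.one_lt_dist_of_ne_of_not_adj huv hnadj)
  obtain ⟨m, hum, hmv⟩ := r.exists_adj_adj_of_length_eq_two hr2
  have hm : ecc G m ≤ 1 := by
    have := hc.nonempty
    refine ecc_le_iff.2 fun x => ?_
    obtain ⟨p, hp⟩ := hc.exists_walk_length_eq_dist u x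
    obtain ⟨q, hq⟩ := hc.exists_walk_length_eq_dist v x
    rcases hT.isAcyclic.eq_or_adj_of_walks_length_le_two hum hmv.symm huv p
      (hp ▸ (dist_le_ecc u x).trans hu) q (hq ▸ (dist_le_ecc v x).trans hv) with rfl | h
    · simp
    · exact (dist_eq_one_iff_adj.2 h).le
  exact absurd (h2 m) (by omega)

theorem sum_edgeFinset_lift_add_eq_sum_degree_nsmul [Fintype V] [DecidableEq V]
    [DecidableRel G.Adj] {M : Type*} [AddCommMonoid M] (f : V → M) :
    ∑ e ∈ G.edgeFinset, Sym2.lift ⟨fun u v => f u + f v, fun _ _ => add_comm _ _⟩ e =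
      ∑ v, G.degree v • f v := by
  calc _ = ∑ d : G.Dart, f d.fst := by
        rw [← sum_fiberwise_of_maps_to (g := Dart.edge) (t := G.edgeFinset)
          fun d _ => mem_edgeFinset.2 d.edge_mem]
        refine sum_congr rfl fun e he => ?_
        induction e with | h x y =>
        let d : G.Dart := ⟨(x, y), mem_edgeFinset.1 he⟩
        rw [show s(x, y) = d.edge from rfl, d.edge_fiber, sum_pair d.symm_ne.symm]
        rfl
    _ = _ := by
        rw [← sum_fiberwise (g := fun d : G.Dart => d.fst)]
        refine sum_congr rfl fun v _ => ?_
        rw [sum_congr rfl fun d hd => by rw [(mem_filter.1 hd).2], sum_const,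
          dart_fst_fiber_card_eq_degree]

lemma deg_eq_degree [Fintype V] [DecidableRel G.Adj] (v : V) : deg G v = G.degree v := by
  rw [deg, ← card_neighborSet_eq_degree, Set.ncard_eq_toFinset_card', Set.toFinset_card]

lemma ree_eq_sum_deg_div_ecc [Fintype V] (G : SimpleGraph V) :
    ree G = ∑ v, (deg G v : ℝ) / ecc G v := by
  classical
  rw [ree]
  convert sum_edgeFinset_lift_add_eq_sum_degree_nsmul (G := G) (fun v => 1 / (ecc G v : ℝ))
    using 1
  simp only [nsmul_eq_mul, deg_eq_degree, mul_one_div]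

lemma ree_le_of_two_le_ecc [Fintype V] (h2 : ∀ v, 2 ≤ ecc G v) :
    ree G ≤ (∑ v, (deg G v : ℝ)) / 3 + (∑ v with ecc G v = 2, (deg G v : ℝ)) / 6 := by
  rw [ree_eq_sum_deg_div_ecc, sum_filter, sum_div, sum_div, ← sum_add_distrib]
  refine sum_le_sum fun v _ => ?_
  split_ifs with h
  · rw [h]; push_cast; linarith
  · have h3 : (3 : ℝ) ≤ ecc G v := by exact_mod_cast (show 3 ≤ ecc G v by have := h2 v; omega)
    rw [zero_div, add_zero]
    exact div_le_div_of_nonneg_left (Nat.cast_nonneg _) (by norm_num) h3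

lemma ree_eq_of_two_le_ecc_of_ecc_le_three [Fintype V] (h2 : ∀ v, 2 ≤ ecc G v)
    (h3 : ∀ v, ecc G v ≤ 3) :
    ree G = (∑ v, (deg G v : ℝ)) / 3 + (∑ v with ecc G v = 2, (deg G v : ℝ)) / 6 := by
  rw [ree_eq_sum_deg_div_ecc, sum_filter, sum_div, sum_div, ← sum_add_distrib]
  refine sum_congr rfl fun v _ => ?_
  split_ifs with h
  · rw [h]; push_cast; ring
  · rw [show ecc G v = 3 by have := h2 v; have := h3 v; omega]; norm_num

lemma IsTree.sum_deg [Fintype V] (hT : G.IsTree) :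
    ∑ v, (deg G v : ℝ) = 2 * Fintype.card V - 2 := by
  classical
  simp only [deg_eq_degree]
  rw [← Nat.cast_sum, G.sum_degrees_eq_twice_card_edges, ← hT.card_edgeFinset]
  push_cast
  ring

def IsDominatingEdge (G : SimpleGraph V) (u v : V) : Prop :=
  G.Adj u v ∧ ∀ x, G.Adj u x ∨ G.Adj v x

lemma IsDominatingEdge.symm (h : G.IsDominatingEdge u v) : G.IsDominatingEdge v u :=
  ⟨h.1.symm, fun x => (h.2 x).symm⟩

lemma IsDominatingEdge.comap {W : Type*} {H : SimpleGraph W} (e : G ≃g H) {p q : W}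
    (h : H.IsDominatingEdge p q) : G.IsDominatingEdge (e.symm p) (e.symm q) :=
  ⟨by simpa [← e.map_adj_iff] using h.1, fun x => by simpa [← e.map_adj_iff] using h.2 (e x)⟩

lemma IsDominatingEdge.ecc_le_two [Finite V] (h : G.IsDominatingEdge u v) : ecc G u ≤ 2 := by
  have : Nonempty V := ⟨u⟩
  refine ecc_le_iff.2 fun x => ?_
  rcases h.2 x with hux | hvx
  · exact (dist_le (.cons hux .nil)).trans (by simp)
  · exact dist_le (.cons h.1 (.cons hvx .nil))

lemma IsDominatingEdge.ecc_le_three [Finite V] (hG : G.Connected) (h : G.IsDominatingEdge u v)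
    (x : V) : ecc G x ≤ 3 := by
  rcases h.2 x with hux | hvx
  · exact (hG.ecc_le_dist_add_ecc x u).trans
      (add_le_add (dist_eq_one_iff_adj.2 hux.symm).le h.ecc_le_two)
  · exact (hG.ecc_le_dist_add_ecc x v).trans
      (add_le_add (dist_eq_one_iff_adj.2 hvx.symm).le h.symm.ecc_le_two)

lemma IsDominatingEdge.exists_adj_ne [Finite V] (h2 : ∀ w, 2 ≤ ecc G w)
    (h : G.IsDominatingEdge u v) : ∃ x, G.Adj u x ∧ x ≠ v := by
  by_contra! hu
  have : Nonempty V := ⟨u⟩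
  have hv : ecc G v ≤ 1 := ecc_le_iff.2 fun x => by
    rcases h.2 x with hux | hvx
    · simp [hu x hux]
    · exact (dist_eq_one_iff_adj.2 hvx).le
  exact absurd (h2 v) (by omega)

lemma IsAcyclic.not_adj_and_adj (hG : G.IsAcyclic) (h : G.IsDominatingEdge u v) (x : V) :
    ¬ (G.Adj u x ∧ G.Adj v x) :=
  fun ⟨hux, hvx⟩ => hG.not_adj_of_adj_of_adj h.1 hux hvx.symm

lemma IsAcyclic.eq_or_eq_or_eq_or_eq_of_adj (hG : G.IsAcyclic) (h : G.IsDominatingEdge u v)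
    (hxy : G.Adj x y) : x = u ∨ x = v ∨ y = u ∨ y = v := by
  by_contra! hne
  obtain ⟨hxu, hxv, hyu, hyv⟩ := hne
  rcases h.2 x with hx | hx <;> rcases h.2 y with hy | hy
  · exact hG.not_adj_of_adj_of_adj hx hy hxy.symm
  · exact hG.not_adj_of_adj_of_adj_of_adj h.1 hx hy.symm hxv hyu hxy
  · exact hG.not_adj_of_adj_of_adj_of_adj h.1.symm hx hy.symm hxu hyv hxy
  · exact hG.not_adj_of_adj_of_adj hx hy hxy.symm

lemma IsAcyclic.deg_add_deg_eq_card [Fintype V] (hG : G.IsAcyclic) (h : G.IsDominatingEdge u v) :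
    deg G u + deg G v = Fintype.card V := by
  classical
  simp only [deg_eq_degree, ← card_neighborFinset_eq_degree]
  rw [← card_union_of_disjoint, ← card_univ]
  · congr
    ext x
    simpa using h.2 x
  · exact Finset.disjoint_left.2 fun x hux hvx =>
      hG.not_adj_and_adj h x ⟨by simpa using hux, by simpa using hvx⟩

lemma IsTree.pairwiseDisjoint_neighborFinset [Fintype V] [DecidableRel G.Adj] (hT : G.IsTree)
    (h2 : ∀ w, 2 ≤ ecc G w) :
    (({v | ecc G v = 2} : Finset V) : Set V).PairwiseDisjoint (G.neighborFinset ·) := by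
  intro c hc c' hc' hne
  simp only [coe_filter, mem_univ, true_and, Set.mem_ofPred_eq] at hc hc'
  have hcc' := hT.adj_of_ecc_le_two h2 hc.le hc'.le hne
  exact Finset.disjoint_left.2 fun x hcx hc'x => hT.isAcyclic.not_adj_of_adj_of_adj hcc'
    (by simpa using hcx) (by simpa [adj_comm] using hc'x)

lemma IsTree.sum_deg_ecc_eq_two_le_card [Fintype V] (hT : G.IsTree) (h2 : ∀ w, 2 ≤ ecc G w) :
    ∑ v with ecc G v = 2, deg G v ≤ Fintype.card V ∧
      (∑ v with ecc G v = 2, deg G v = Fintype.card V → ∃ u v, G.IsDominatingEdge u v) := by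
  classical
  have hS : ∑ v with ecc G v = 2, deg G v =
      #(({v | ecc G v = 2} : Finset V).biUnion (G.neighborFinset ·)) := by
    rw [card_biUnion (hT.pairwiseDisjoint_neighborFinset h2)]
    simp [deg_eq_degree]
  refine ⟨hS ▸ card_le_univ _, fun hcard => ?_⟩
  have hcov : ∀ x, ∃ c, ecc G c = 2 ∧ G.Adj c x := by
    intro x
    have hx := (eq_univ_of_card _ (hS ▸ hcard)).symm ▸ mem_univ x
    simpa using hx
  obtain ⟨u, hu, -⟩ := hcov hT.connected.nonempty.some
  obtain ⟨v, hv, hvu⟩ := hcov u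
  refine ⟨u, v, hvu.symm, fun x => ?_⟩
  obtain ⟨c, hc, hcx⟩ := hcov x
  by_cases hcu : c = u
  · exact Or.inl (hcu ▸ hcx)
  by_cases hcv : c = v
  · exact Or.inr (hcv ▸ hcx)
  exact (hT.isAcyclic.not_adj_of_adj_of_adj hvu.symm (hT.adj_of_ecc_le_two h2 hu.le hc.le
    (Ne.symm hcu)) (hT.adj_of_ecc_le_two h2 hc.le hv.le hcv)).elim

lemma IsTree.ree_le_five_mul_card_sub_four_div_six [Fintype V] (hT : G.IsTree)
    (h2 : ∀ w, 2 ≤ ecc G w) :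
    ree G ≤ (5 * Fintype.card V - 4) / 6 ∧
      (ree G = (5 * Fintype.card V - 4) / 6 → ∃ u v, G.IsDominatingEdge u v) := by
  obtain ⟨hS, hSeq⟩ := hT.sum_deg_ecc_eq_two_le_card h2
  have hree := ree_le_of_two_le_ecc h2
  rw [hT.sum_deg, ← Nat.cast_sum] at hree
  have hS' : ((∑ v with ecc G v = 2, deg G v : ℕ) : ℝ) ≤ Fintype.card V := by exact_mod_cast hS
  refine ⟨by linarith, fun heq => hSeq (le_antisymm hS ?_)⟩
  exact_mod_cast (show (Fintype.card V : ℝ) ≤ (∑ v with ecc G v = 2, deg G v : ℕ) by linarith)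

lemma IsTree.ree_eq_of_isDominatingEdge [Fintype V] (hT : G.IsTree) (h2 : ∀ w, 2 ≤ ecc G w)
    (h : G.IsDominatingEdge u v) : ree G = (5 * Fintype.card V - 4) / 6 := by
  classical
  have hecc {w w'} (hw : G.IsDominatingEdge w w') : ecc G w = 2 := le_antisymm hw.ecc_le_two (h2 w)
  have hS : Fintype.card V ≤ ∑ v with ecc G v = 2, deg G v :=
    calc Fintype.card V = ∑ w ∈ {u, v}, deg G w := by
          rw [sum_pair h.1.ne, hT.isAcyclic.deg_add_deg_eq_card h]
      _ ≤ _ := sum_le_sum_of_subset (by simp [insert_subset_iff, hecc h, hecc h.symm])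
  have hS' : ((∑ v with ecc G v = 2, deg G v : ℕ) : ℝ) = Fintype.card V := by
    exact_mod_cast le_antisymm (hT.sum_deg_ecc_eq_two_le_card h2).1 hS
  rw [ree_eq_of_two_le_ecc_of_ecc_le_three h2 (h.ecc_le_three hT.connected), hT.sum_deg,
    ← Nat.cast_sum, hS']
  ring

lemma nonempty_iso_of_card_fiber_eq {W K : Type*} [Finite V] [Finite W] {H : SimpleGraph W}
    (R : K → K → Prop) (f : V → K) (g : W → K) (hG : ∀ x y, G.Adj x y ↔ R (f x) (f y))
    (hH : ∀ x y, H.Adj x y ↔ R (g x) (g y))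
    (hcard : ∀ k, Nat.card {x // f x = k} = Nat.card {y // g y = k}) : Nonempty (G ≃g H) := by
  let e k := (Finite.card_eq.1 (hcard k)).some
  exact ⟨⟨Equiv.ofFiberEquiv e, by simp only [hG, hH, Equiv.ofFiberEquiv_map, implies_true]⟩⟩

open Classical in
/-- Parts `2` and `3` are the leaves at `u` and at `v` when `uv` is a dominating edge of a tree. -/
noncomputable def doubleStarPart (G : SimpleGraph V) (u v x : V) : Fin 4 :=
  if x = u then 0 else if x = v then 1 else if G.Adj u x then 2 else 3

lemma doubleStarPart_eq_zero_iff : G.doubleStarPart u v x = 0 ↔ x = u := by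
  unfold doubleStarPart; split_ifs <;> simp_all

lemma doubleStarPart_eq_one_iff (huv : u ≠ v) : G.doubleStarPart u v x = 1 ↔ x = v := by
  unfold doubleStarPart; split_ifs <;> simp_all

lemma doubleStarPart_eq_two_iff : G.doubleStarPart u v x = 2 ↔ x ≠ u ∧ x ≠ v ∧ G.Adj u x := by
  unfold doubleStarPart; split_ifs <;> simp_all

lemma doubleStarPart_eq_three_iff :
    G.doubleStarPart u v x = 3 ↔ x ≠ u ∧ x ≠ v ∧ ¬ G.Adj u x := by
  unfold doubleStarPart; split_ifs <;> simp_all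

lemma natCard_doubleStarPart_eq_zero : Nat.card {x // G.doubleStarPart u v x = 0} = 1 := by
  simp only [doubleStarPart_eq_zero_iff, Nat.card_unique]

lemma natCard_doubleStarPart_eq_one (huv : u ≠ v) :
    Nat.card {x // G.doubleStarPart u v x = 1} = 1 := by
  simp only [doubleStarPart_eq_one_iff huv, Nat.card_unique]

/-- A double star is the path `2 - 0 - 1 - 3` with both ends blown up. -/
lemma adj_iff_doubleStarPart (h : G.IsDominatingEdge u v)
    (hcommon : ∀ x, ¬ (G.Adj u x ∧ G.Adj v x))
    (hedge : ∀ x y, G.Adj x y → x = u ∨ x = v ∨ y = u ∨ y = v) (x y : V) :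
    G.Adj x y ↔ s(G.doubleStarPart u v x, G.doubleStarPart u v y) ∈
      ({s(0, 1), s(0, 2), s(1, 3)} : Set (Sym2 (Fin 4))) := by
  have := h.1.ne
  unfold doubleStarPart
  split_ifs <;> subst_vars <;> simp only [Set.mem_insert_iff, Set.mem_singleton_iff, Sym2.eq_iff] <;>
    grind [adj_comm, IsDominatingEdge]

lemma _root_.Fin.natCard_subtype_le_val_lt_add {n k m : ℕ} (h : k + m ≤ n) :
    Nat.card {x : Fin n // k ≤ x.val ∧ x.val < k + m} = m :=
  Nat.card_eq_of_equiv_fin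
    { toFun x := ⟨x.1 - k, by omega⟩
      invFun i := ⟨⟨k + i, by omega⟩, by simp⟩
      left_inv x := by ext; simp; omega
      right_inv i := by ext; simp }

section doubleStar

variable {a b : ℕ}

lemma doubleStar_adj {x y : Fin (a + b + 2)} :
    (doubleStar a b).Adj x y ↔ x.val ≠ y.val ∧
      (((x.val = 0 ∧ y.val = 1) ∨ (x.val = 0 ∧ 2 ≤ y.val ∧ y.val < a + 2) ∨
        (x.val = 1 ∧ a + 2 ≤ y.val)) ∨
      ((y.val = 0 ∧ x.val = 1) ∨ (y.val = 0 ∧ 2 ≤ x.val ∧ x.val < a + 2) ∨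
        (y.val = 1 ∧ a + 2 ≤ x.val))) := by
  rw [doubleStar, fromRel_adj, Ne, Fin.ext_iff]

lemma isDominatingEdge_doubleStar : (doubleStar a b).IsDominatingEdge 0 1 :=
  ⟨by rw [doubleStar_adj, Fin.val_zero, Fin.val_one]; omega,
    fun x => by rw [doubleStar_adj, doubleStar_adj, Fin.val_zero, Fin.val_one]; omega⟩

lemma doubleStar_not_adj_and_adj (x : Fin (a + b + 2)) :
    ¬ ((doubleStar a b).Adj 0 x ∧ (doubleStar a b).Adj 1 x) := by
  rw [doubleStar_adj, doubleStar_adj, Fin.val_zero, Fin.val_one]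
  omega

lemma doubleStar_eq_or_eq_of_adj {x y : Fin (a + b + 2)} (hxy : (doubleStar a b).Adj x y) :
    x = 0 ∨ x = 1 ∨ y = 0 ∨ y = 1 := by
  simp only [doubleStar_adj] at hxy
  simp only [Fin.ext_iff, Fin.val_zero, Fin.val_one]
  omega

lemma doubleStarPart_doubleStar_eq_two_iff {x : Fin (a + b + 2)} :
    (doubleStar a b).doubleStarPart 0 1 x = 2 ↔ 2 ≤ x.val ∧ x.val < 2 + a := by
  rw [doubleStarPart_eq_two_iff, doubleStar_adj, Ne, Ne, Fin.ext_iff, Fin.ext_iff, Fin.val_zero,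
    Fin.val_one]
  omega

lemma doubleStarPart_doubleStar_eq_three_iff {x : Fin (a + b + 2)} :
    (doubleStar a b).doubleStarPart 0 1 x = 3 ↔ a + 2 ≤ x.val ∧ x.val < a + 2 + b := by
  rw [doubleStarPart_eq_three_iff, doubleStar_adj, Ne, Ne, Fin.ext_iff, Fin.ext_iff, Fin.val_zero,
    Fin.val_one]
  omega

lemma natCard_doubleStarPart_doubleStar_eq_two :
    Nat.card {x // (doubleStar a b).doubleStarPart 0 1 x = 2} = a :=
  (Nat.card_congr (Equiv.subtypeEquivRight fun _ => doubleStarPart_doubleStar_eq_two_iff)).trans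
    (Fin.natCard_subtype_le_val_lt_add (by omega))

lemma natCard_doubleStarPart_doubleStar_eq_three :
    Nat.card {x // (doubleStar a b).doubleStarPart 0 1 x = 3} = b :=
  (Nat.card_congr (Equiv.subtypeEquivRight fun _ => doubleStarPart_doubleStar_eq_three_iff)).trans
    (Fin.natCard_subtype_le_val_lt_add (by omega))

end doubleStar

lemma IsTree.exists_iso_doubleStar [Finite V] (hT : G.IsTree) (h2 : ∀ w, 2 ≤ ecc G w)
    (h : G.IsDominatingEdge u v) :
    ∃ a b, 1 ≤ a ∧ 1 ≤ b ∧ a + b + 2 = Nat.card V ∧ Nonempty (G ≃g doubleStar a b) := by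
  have huv := h.1.ne
  set a := Nat.card {x // G.doubleStarPart u v x = 2}
  set b := Nat.card {x // G.doubleStarPart u v x = 3}
  have hfib (k : Fin 4) : Nat.card {x // G.doubleStarPart u v x = k} =
      Nat.card {x // (doubleStar a b).doubleStarPart 0 1 x = k} := by
    fin_cases k
    · simp only [Fin.zero_eta, natCard_doubleStarPart_eq_zero]
    · simp only [Fin.mk_one, natCard_doubleStarPart_eq_one huv,
        natCard_doubleStarPart_eq_one zero_ne_one]
    · exact natCard_doubleStarPart_doubleStar_eq_two.symm
    · exact natCard_doubleStarPart_doubleStar_eq_three.symm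
  refine ⟨a, b, ?_, ?_, ?_, nonempty_iso_of_card_fiber_eq
    (fun i j => s(i, j) ∈ ({s(0, 1), s(0, 2), s(1, 3)} : Set (Sym2 (Fin 4)))) _ _
    (adj_iff_doubleStarPart h (hT.isAcyclic.not_adj_and_adj h)
      fun _ _ => hT.isAcyclic.eq_or_eq_or_eq_or_eq_of_adj h)
    (adj_iff_doubleStarPart isDominatingEdge_doubleStar doubleStar_not_adj_and_adj
      fun _ _ => doubleStar_eq_or_eq_of_adj) hfib⟩
  · obtain ⟨x, hux, hxv⟩ := h.exists_adj_ne h2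
    exact Nat.card_pos_iff.2 ⟨⟨⟨x, doubleStarPart_eq_two_iff.2 ⟨hux.ne', hxv, hux⟩⟩⟩, inferInstance⟩
  · obtain ⟨x, hvx, hxu⟩ := h.symm.exists_adj_ne h2
    exact Nat.card_pos_iff.2 ⟨⟨⟨x, doubleStarPart_eq_three_iff.2
      ⟨hxu, hvx.ne', fun hux => hT.isAcyclic.not_adj_and_adj h x ⟨hux, hvx⟩⟩⟩⟩, inferInstance⟩
  · rw [Nat.card_congr (Equiv.sigmaFiberEquiv (G.doubleStarPart u v)).symm, Nat.card_sigma,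
      Fin.sum_univ_four, natCard_doubleStarPart_eq_zero, natCard_doubleStarPart_eq_one huv]
    ring

end SimpleGraph

/-- for a tree T on n vertices with domination number 2,
ξ^{ee}(T) ≤ (5n-4)/6 with equality iff T is a double star P_2(a,b). -/
theorem stmt12 (n : ℕ) (T : SimpleGraph (Fin n)) (hT : T.IsTree)
    (hd : domNum T = 2) :
    ree T ≤ (5 * (n : ℝ) - 4) / 6 ∧
    (ree T = (5 * (n : ℝ) - 4) / 6 ↔ ∃ a b : ℕ, 1 ≤ a ∧ 1 ≤ b ∧ a + b = n - 2 ∧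
      Nonempty (T ≃g doubleStar a b)) := by
  have h2 := hT.connected.two_le_ecc_of_one_lt_domNum (by omega)
  obtain ⟨hle, hdom⟩ := hT.ree_le_five_mul_card_sub_four_div_six h2
  rw [Fintype.card_fin] at hle hdom
  refine ⟨hle, fun heq => ?_, ?_⟩
  · obtain ⟨u, v, huv⟩ := hdom heq
    obtain ⟨a, b, ha, hb, hab, he⟩ := hT.exists_iso_doubleStar h2 huv
    exact ⟨a, b, ha, hb, by rw [Nat.card_eq_fintype_card, Fintype.card_fin] at hab; omega, he⟩
  · rintro ⟨a, b, -, -, -, ⟨e⟩⟩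
    simpa using hT.ree_eq_of_isDominatingEdge h2 (isDominatingEdge_doubleStar.comap e)
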